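/- arXiv:2310.18759 — 3 statements merged into one kernel-verified Lean document; each statement's English description precedes it below -/
import Mathlib

section
/- Let 𝒪(−1)² → 𝒪² be an injective map of sheaves on P¹ whose cokernel is 𝒪_x ⊕ 𝒪_{x′} or supported at one point of length 2. Then the embedding 𝒪(−1)² → 𝒪² factors through a subsheaf of the form 𝒪(−1) ⊕ 𝒪 ⊂ 𝒪² (the kernel of a surjection 𝒪² → 𝒪_x for some point x in the support of the cokernel). -/
/-!
Write `M = x₀ A₀ + x₁ A₁` with constant matrices `Aᵢ`. Over an algebraically closed field the
pencil `p₀ A₀ + p₁ A₁` has a singular member for some `p ≠ 0` (from an eigenvalue of `A₀⁻¹ A₁`,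
or `p = (1, 0)` if `A₀` is singular). A nonzero covector `φ` killing `M(p)` makes `φ M` a row of
linear forms vanishing at `p`, i.e. `φ M = ℓ_p r` for the form `ℓ_p` cutting out `p` and a
constant row `r`. Completing `φ` to an invertible constant matrix `Q`, the first row of `Q M` is
`ℓ_p r`, so `Q M = diag(ℓ_p, 1) T` and `M = (Q⁻¹ diag(ℓ_p, 1)) T`; the first factor is the
elementary modification at `p`, with determinant a nonzero multiple of `ℓ_p`.
-/

open MvPolynomial
open Matrix

theorem MvPolynomial.IsHomogeneous.exists_eq_sum_C_mul_X {σ R : Type*} [CommSemiring R]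
    [Fintype σ] {f : MvPolynomial σ R} (hf : f.IsHomogeneous 1) :
    ∃ a : σ → R, f = ∑ i, C (a i) * X i := by
  have hspan : f ∈ Submodule.span R (Set.range X) :=
    homogeneousSubmodule_one_eq_span_X (R := R) ▸ hf
  obtain ⟨a, ha⟩ := (Submodule.mem_span_range_iff_exists_fun R).mp hspan
  exact ⟨a, by simp only [← ha, smul_eq_C_mul]⟩

theorem Matrix.exists_ne_zero_det_smul_add_smul_eq_zero {n k : Type*} [Fintype n] [DecidableEq n]
    [Nonempty n] [Field k] [IsAlgClosed k] (A B : Matrix n n k) :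
    ∃ p : Fin 2 → k, p ≠ 0 ∧ (p 0 • A + p 1 • B).det = 0 := by
  by_cases hA : A.det = 0
  · exact ⟨![1, 0], fun h => one_ne_zero (congrFun h 0), by simpa using hA⟩
  obtain ⟨μ, hμ⟩ := IsAlgClosed.exists_root (A⁻¹ * B).charpoly
    (by rw [charpoly_degree_eq_dim]; exact_mod_cast Fintype.card_ne_zero)
  refine ⟨![μ, -1], fun h => by simpa using congrFun h 1, ?_⟩
  have hfactor : μ • A + (-1 : k) • B = A * (scalar n μ - A⁻¹ * B) := by
    rw [mul_sub, mul_nonsing_inv_cancel_left _ _ (isUnit_iff_ne_zero.mpr hA),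
      ← (scalar_commute μ (Commute.all μ) A).eq]
    simp [sub_eq_add_neg, smul_eq_diagonal_mul]
  simp only [Matrix.cons_val_zero, Matrix.cons_val_one, Matrix.cons_val_fin_one]
  rw [hfactor, det_mul, ← eval_charpoly, hμ.eq_zero, mul_zero]

section
variable {k : Type*} [Field k]

noncomputable def formVanishingAt (p : Fin 2 → k) : MvPolynomial (Fin 2) k :=
  C (p 1) * X 0 - C (p 0) * X 1

theorem isHomogeneous_formVanishingAt (p : Fin 2 → k) : (formVanishingAt p).IsHomogeneous 1 :=
  (isHomogeneous_C_mul_X _ _).sub (isHomogeneous_C_mul_X _ _)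

theorem formVanishingAt_ne_zero {p : Fin 2 → k} (hp : p ≠ 0) : formVanishingAt p ≠ 0 := by
  intro h
  apply hp
  ext i
  fin_cases i
  · simpa [formVanishingAt, coeff_X, Finsupp.single_eq_single_iff] using
      congrArg (coeff (Finsupp.single 1 1)) h
  · simpa [formVanishingAt, coeff_X, Finsupp.single_eq_single_iff] using
      congrArg (coeff (Finsupp.single 0 1)) h

theorem exists_eq_C_mul_formVanishingAt {f : MvPolynomial (Fin 2) k} (hf : f.IsHomogeneous 1)
    {p : Fin 2 → k} (hp : p ≠ 0) (hfp : eval p f = 0) : ∃ r, f = C r * formVanishingAt p := by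
  obtain ⟨a, rfl⟩ := hf.exists_eq_sum_C_mul_X
  simp only [Fin.sum_univ_two, map_add, map_mul, eval_C, eval_X] at hfp
  obtain ⟨r, ha0, ha1⟩ : ∃ r, a 0 = r * p 1 ∧ a 1 = -(r * p 0) := by
    by_cases hp1 : p 1 = 0
    · have hp0 : p 0 ≠ 0 := fun hp0 => hp (funext fun i => by fin_cases i <;> assumption)
      refine ⟨-(a 1 / p 0), ?_, by field_simp⟩
      rw [hp1, mul_zero]
      simpa [hp1, hp0] using hfp
    · exact ⟨a 0 / p 1, by field_simp, by field_simp; linear_combination hfp⟩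
  refine ⟨r, ?_⟩
  rw [Fin.sum_univ_two, ha0, ha1, formVanishingAt]
  simp only [map_mul, map_neg]
  ring

variable {n : Type*} [Fintype n] [DecidableEq n]

theorem exists_det_map_eval_eq_zero [IsAlgClosed k] [Nonempty n]
    {M : Matrix n n (MvPolynomial (Fin 2) k)} (hM : ∀ i j, (M i j).IsHomogeneous 1) :
    ∃ p : Fin 2 → k, p ≠ 0 ∧ (M.map (eval p)).det = 0 := by
  choose a ha using fun i j => (hM i j).exists_eq_sum_C_mul_X
  obtain ⟨p, hp, hdet⟩ := Matrix.exists_ne_zero_det_smul_add_smul_eq_zero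
    (.of fun i j => a i j 0) (.of fun i j => a i j 1)
  refine ⟨p, hp, ?_⟩
  convert hdet using 2
  ext i j
  simp [ha i j, Fin.sum_univ_two, mul_comm]

theorem exists_vecMul_eq_C_mul_formVanishingAt {M : Matrix n n (MvPolynomial (Fin 2) k)}
    (hM : ∀ i j, (M i j).IsHomogeneous 1) {p : Fin 2 → k} (hp : p ≠ 0)
    (hdet : (M.map (eval p)).det = 0) :
    ∃ φ : n → k, φ ≠ 0 ∧ ∃ r : n → k,
      (fun i => C (φ i)) ᵥ* M = fun j => C (r j) * formVanishingAt p := by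
  obtain ⟨φ, hφ, hker⟩ := Matrix.exists_vecMul_eq_zero_iff.mpr hdet
  refine ⟨φ, hφ, ?_⟩
  choose r hr using fun j => exists_eq_C_mul_formVanishingAt (f := ((fun i => C (φ i)) ᵥ* M) j)
    (.sum _ _ _ fun i _ => (hM i j).C_mul _) hp
    (by simpa [Matrix.vecMul, dotProduct] using congrFun hker j)
  exact ⟨r, funext hr⟩

theorem exists_row_zero_eq_det_ne_zero {φ : Fin 2 → k} (hφ : φ ≠ 0) :
    ∃ Q : Matrix (Fin 2) (Fin 2) k, Q 0 = φ ∧ Q.det ≠ 0 := by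
  by_cases hφ0 : φ 0 = 0
  · have hφ1 : φ 1 ≠ 0 := fun hφ1 => hφ (funext fun i => by fin_cases i <;> assumption)
    exact ⟨!![φ 0, φ 1; 1, 0], by ext j; fin_cases j <;> rfl, by simpa [det_fin_two] using hφ1⟩
  · exact ⟨!![φ 0, φ 1; 0, 1], by ext j; fin_cases j <;> rfl, by simpa [det_fin_two] using hφ0⟩

theorem exists_factorization_of_vecMul_eq {M : Matrix (Fin 2) (Fin 2) (MvPolynomial (Fin 2) k)}
    (hM : ∀ i j, (M i j).IsHomogeneous 1) {Q : Matrix (Fin 2) (Fin 2) k} (hQ : Q.det ≠ 0)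
    {ℓ : MvPolynomial (Fin 2) k} (hℓ : ℓ.IsHomogeneous 1) (hℓ0 : ℓ ≠ 0) {r : Fin 2 → k}
    (hrow : (fun i => C (Q 0 i)) ᵥ* M = fun j => C (r j) * ℓ) :
    ∃ S T : Matrix (Fin 2) (Fin 2) (MvPolynomial (Fin 2) k),
      (∀ i, (S i 0).IsHomogeneous 1) ∧ (∀ i, (S i 1).IsHomogeneous 0) ∧
      S.det ≠ 0 ∧
      (∀ j, (T 0 j).IsHomogeneous 0) ∧ (∀ j, (T 1 j).IsHomogeneous 1) ∧
      M = S * T ∧ S.det ∣ M.det := by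
  have hQu : IsUnit Q.det := isUnit_iff_ne_zero.mpr hQ
  set S := Q⁻¹.map C * diagonal ![ℓ, 1]
  set T : Matrix (Fin 2) (Fin 2) (MvPolynomial (Fin 2) k) :=
    .of ![fun j => C (r j), fun j => ∑ l, C (Q 1 l) * M l j]
  have hST : M = S * T := by
    have hDT : diagonal ![ℓ, 1] * T = Q.map C * M := by
      ext i j : 1
      fin_cases i
      · simpa [T, mul_comm, Matrix.mul_apply, vecMul, dotProduct] using (congrFun hrow j).symm
      · simp [T, Matrix.mul_apply]
    rw [Matrix.mul_assoc, hDT, ← Matrix.mul_assoc, ← Matrix.map_mul, nonsing_inv_mul _ hQu,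
      Matrix.map_one _ (map_zero C) (map_one C), Matrix.one_mul]
  refine ⟨S, T, fun i => ?_, fun i => ?_, ?_, fun j => ?_, fun j => ?_, hST,
    ⟨T.det, by rw [hST, det_mul]⟩⟩
  · simpa [S] using hℓ.C_mul (Q⁻¹ i 0)
  · simpa [S] using isHomogeneous_C _ (Q⁻¹ i 1)
  · have hSdet : S.det = C Q.det⁻¹ * ℓ := by
      rw [det_mul, det_diagonal, ← RingHom.mapMatrix_apply, ← RingHom.map_det]
      simp
    rw [hSdet]
    exact mul_ne_zero (C_ne_zero.mpr (inv_ne_zero hQ)) hℓ0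
  · simpa [T] using isHomogeneous_C _ (r j)
  · simpa [T] using IsHomogeneous.sum .univ _ _ fun l _ => (hM l j).C_mul (Q 1 l)

end

theorem stmt11_general (k : Type*) [Field k] [IsAlgClosed k]
    (M : Matrix (Fin 2) (Fin 2) (MvPolynomial (Fin 2) k))
    (hhom : ∀ i j, (M i j).IsHomogeneous 1) :
    ∃ S T : Matrix (Fin 2) (Fin 2) (MvPolynomial (Fin 2) k),
      (∀ i, (S i 0).IsHomogeneous 1) ∧ (∀ i, (S i 1).IsHomogeneous 0) ∧
      S.det ≠ 0 ∧
      (∀ j, (T 0 j).IsHomogeneous 0) ∧ (∀ j, (T 1 j).IsHomogeneous 1) ∧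
      M = S * T ∧ S.det ∣ M.det := by
  obtain ⟨p, hp, hsing⟩ := exists_det_map_eval_eq_zero hhom
  obtain ⟨φ, hφ, r, hr⟩ := exists_vecMul_eq_C_mul_formVanishingAt hhom hp hsing
  obtain ⟨Q, rfl, hQ⟩ := exists_row_zero_eq_det_ne_zero hφ
  exact exists_factorization_of_vecMul_eq hhom hQ (isHomogeneous_formVanishingAt p)
    (formVanishingAt_ne_zero hp) hr

theorem stmt11 (k : Type*) [Field k] [IsAlgClosed k]
    (M : Matrix (Fin 2) (Fin 2) (MvPolynomial (Fin 2) k))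
    (hhom : ∀ i j, (M i j).IsHomogeneous 1)
    (hdet : M.det ≠ 0) :
    ∃ S T : Matrix (Fin 2) (Fin 2) (MvPolynomial (Fin 2) k),
      (∀ i, (S i 0).IsHomogeneous 1) ∧ (∀ i, (S i 1).IsHomogeneous 0) ∧
      S.det ≠ 0 ∧
      (∀ j, (T 0 j).IsHomogeneous 0) ∧ (∀ j, (T 1 j).IsHomogeneous 1) ∧
      M = S * T ∧ S.det ∣ M.det :=
  stmt11_general k M hhom
end

section
/- Let 𝔤 be the 4-dimensional Lie algebra over a field of characteristic 0 with basis (h₁, h₂, e₁, e₂) and brackets [h₁,h₂] = [e₁,e₂] = 0, [h_i, e_i] = 2e_i, and [h_j, e_i] = −e_i for i ≠ j. Suppose Π′ is a bivector field on a neighborhood of 0 in 𝔤* (coordinates h₁,h₂,e₁,e₂) such that the Schouten bracket [Π^lin, Π′] = 0, where Π^lin = 2e₁ ∂_{h₁}∧∂_{e₁} − e₁ ∂_{h₂}∧∂_{e₁} + 2e₂ ∂_{h₂}∧∂_{e₂} − e₂ ∂_{h₁}∧∂_{e₂}. Then the value of Π′ at the origin lies in the span of (2∂_{h₁}−∂_{h₂})∧∂_{e₁},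 (2∂_{h₂}−∂_{h₁})∧∂_{e₂}, and ∂_{h₁}∧∂_{h₂}. -/
/-!
Coordinates on `𝔤*`: index `0 ↔ h₁`, `1 ↔ h₂`, `2 ↔ e₁`, `3 ↔ e₂`.  A bivector
field is an antisymmetric matrix `P : Fin 4 → Fin 4 → MvPolynomial (Fin 4) k` of
components `P^{ab}`, and the Schouten bracket of two bivector fields has
components
`[P,Q]^{abc} = Σ_d (P^{da}∂_d Q^{bc} + P^{db}∂_d Q^{ca} + P^{dc}∂_d Q^{ab}
             + Q^{da}∂_d P^{bc} + Q^{db}∂_d P^{ca} + Q^{dc}∂_d P^{ab})`.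
-/

open MvPolynomial

noncomputable section

variable (k : Type*) [Field k] [CharZero k]

/-- Components of the Schouten bracket of two bivector fields on `k⁴` with
polynomial coefficients. -/
def schouten (P Q : Fin 4 → Fin 4 → MvPolynomial (Fin 4) k) :
    Fin 4 → Fin 4 → Fin 4 → MvPolynomial (Fin 4) k :=
  fun a b c => ∑ d : Fin 4,
    (P d a * pderiv d (Q b c) + P d b * pderiv d (Q c a) + P d c * pderiv d (Q a b)
      + Q d a * pderiv d (P b c) + Q d b * pderiv d (P c a) + Q d c * pderiv d (P a b))

/-- The Lie–Poisson bivector `Π^lin` of `𝔤` (coordinates `h₁,h₂,e₁,e₂` =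
`X 0, X 1, X 2, X 3`). -/
def PiLin : Fin 4 → Fin 4 → MvPolynomial (Fin 4) k :=
  !![0, 0, 2 * X 2, -(X 3);
     0, 0, -(X 2), 2 * X 3;
     -(2 * X 2), X 2, 0, 0;
     X 3, -(2 * X 3), 0, 0]

/-- `(2∂_{h₁}-∂_{h₂})∧∂_{e₁}` -/
def B1 : Fin 4 → Fin 4 → k := !![0, 0, 2, 0; 0, 0, -1, 0; -2, 1, 0, 0; 0, 0, 0, 0]
/-- `(2∂_{h₂}-∂_{h₁})∧∂_{e₂}` -/
def B2 : Fin 4 → Fin 4 → k := !![0, 0, 0, -1; 0, 0, 0, 2; 0, 0, 0, 0; 1, -2, 0, 0]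
/-- `∂_{h₁}∧∂_{h₂}` -/
def B3 : Fin 4 → Fin 4 → k := !![0, 1, 0, 0; -1, 0, 0, 0; 0, 0, 0, 0; 0, 0, 0, 0]

/-! Since `Π^lin` vanishes at the origin, at `0` the bracket `[Π^lin, Π']` only pairs the
constant part `π = Π'(0)` with the constant derivatives `∂_d Π^lin`, i.e. the structure
constants of `𝔤`: it is the Chevalley–Eilenberg coboundary of `π ∈ Λ²𝔤`. Its components
along `h₁∧h₂∧e₁`, `h₁∧h₂∧e₂` and `h₁∧e₁∧e₂` are three independent linear conditions, which cut
the six-dimensional space of skew `π` down to the three-dimensional span of `B1, B2, B3`. -/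

section

omit [CharZero k]

theorem constantCoeff_schouten_of_constantCoeff_eq_zero
    (P Q : Fin 4 → Fin 4 → MvPolynomial (Fin 4) k) (hP : ∀ a b, constantCoeff (P a b) = 0)
    (a b c : Fin 4) :
    constantCoeff (schouten k P Q a b c) = ∑ d : Fin 4,
      (constantCoeff (Q d a) * constantCoeff (pderiv d (P b c))
        + constantCoeff (Q d b) * constantCoeff (pderiv d (P c a))
        + constantCoeff (Q d c) * constantCoeff (pderiv d (P a b))) := by
  simp [schouten, hP]

theorem constantCoeff_PiLin (a b : Fin 4) : constantCoeff (PiLin k a b) = 0 := by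
  fin_cases a <;> fin_cases b <;> simp [PiLin]

theorem constantCoeff_relations_of_schouten_PiLin_eq_zero
    (Q : Fin 4 → Fin 4 → MvPolynomial (Fin 4) k)
    (hQ : ∀ a b c, schouten k (PiLin k) Q a b c = 0) :
    constantCoeff (Q 2 0) + 2 * constantCoeff (Q 2 1) = 0 ∧
      2 * constantCoeff (Q 3 0) + constantCoeff (Q 3 1) = 0 ∧
      2 * constantCoeff (Q 2 3) + constantCoeff (Q 3 2) = 0 := by
  have h₁ := congrArg constantCoeff (hQ 0 1 2)
  have h₂ := congrArg constantCoeff (hQ 0 1 3)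
  have h₃ := congrArg constantCoeff (hQ 0 2 3)
  rw [constantCoeff_schouten_of_constantCoeff_eq_zero _ _ _ (constantCoeff_PiLin k)] at h₁ h₂ h₃
  simp [PiLin, Fin.sum_univ_four, map_ofNat] at h₁ h₂ h₃
  exact ⟨by linear_combination -h₁, by linear_combination h₂, by linear_combination h₃⟩

end

theorem exists_eq_B_combination (π : Fin 4 → Fin 4 → k) (hskew : ∀ a b, π a b = -π b a)
    (h₁ : π 2 0 + 2 * π 2 1 = 0) (h₂ : 2 * π 3 0 + π 3 1 = 0) (h₃ : 2 * π 2 3 + π 3 2 = 0) :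
    ∃ c₁ c₂ c₃ : k, ∀ a b, π a b = c₁ * B1 k a b + c₂ * B2 k a b + c₃ * B3 k a b := by
  refine ⟨π 0 2 / 2, π 1 3 / 2, π 0 1, fun a b => ?_⟩
  fin_cases a <;> fin_cases b <;> simp [B1, B2, B3] <;> grind

theorem stmt15 (P' : Fin 4 → Fin 4 → MvPolynomial (Fin 4) k)
    (hskew : ∀ a b, P' a b = - P' b a)
    (hcomm : ∀ a b c, schouten k (PiLin k) P' a b c = 0) :
    ∃ c₁ c₂ c₃ : k, ∀ a b,
      MvPolynomial.eval (0 : Fin 4 → k) (P' a b)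
        = c₁ * B1 k a b + c₂ * B2 k a b + c₃ * B3 k a b := by
  obtain ⟨h₁, h₂, h₃⟩ := constantCoeff_relations_of_schouten_PiLin_eq_zero k P' hcomm
  simp only [MvPolynomial.eval_zero]
  exact exists_eq_B_combination k _ (fun a b => by rw [hskew, map_neg]) h₁ h₂ h₃

end
end

section
/- Let X be a smooth projective variety of dimension n, N a rank n−1 vector bundle with det(N)^{−1} ≅ ω_X, F ∈ H⁰(X,N) a regular section with smooth zero locus C, and P a vector bundle on X with End(P) = k (P is simple) satisfying Ext^i(P, Λ^i N^∨ ⊗ P) = Ext^{i−1}(P, Λ^i N^∨ ⊗ P) = 0 for 1 ≤ i ≤ n−1. Then End(P|_C) = k; in particular, since C is an elliptic curve (ω_C ≅ 𝒪_C by adjunction), the restriction P|_C is a simple, hence stable, vector bundle on C. -/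
/-!
Splice the resolution `0 → A_{n-1} → ⋯ → A_0 → B → 0` into short exact sequences
`0 → Z_{i+1} → A_{i+1} → Z_i → 0`, where `Z_i = ker (A_i → A_{i-1})` and `Z_0 = ker (A_0 → B)`.
Descending induction along their long exact sequences, starting from `Z_i = 0` for large `i`,
gives `H^i(Z_i) = H^{i+1}(Z_i) = 0`. For `i = 0`, the long exact sequence of
`0 → Z_0 → A_0 → B → 0` then makes `H⁰(A_0) → H⁰(B)` an isomorphism.
-/

open CategoryTheory CategoryTheory.Limits

universe u v

/-- A cohomological functor (`δ`-functor) `H^•` from an abelian category `C`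
(e.g. coherent sheaves on a smooth projective variety `X`) to `k`-vector spaces:
functorial, with connecting maps `δ` and long exact sequences for every short
exact sequence. In Statement 16 it models `H^n(X, -)`; in Statement 17 it models
`Ext^n(P, -)`. -/
structure DeltaFunctor (k : Type u) [Field k] (C : Type u) [Category.{v} C] [Abelian C] where
  H : ℕ → C → Type u
  [acg : ∀ n X, AddCommGroup (H n X)]
  [mod : ∀ n X, Module k (H n X)]
  map : ∀ (n : ℕ) {X Y : C}, (X ⟶ Y) → (H n X →ₗ[k] H n Y)
  map_id : ∀ (n : ℕ) (X : C), map n (𝟙 X) = LinearMap.id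
  map_comp : ∀ (n : ℕ) {X Y Z : C} (f : X ⟶ Y) (g : Y ⟶ Z),
    map n (f ≫ g) = (map n g).comp (map n f)
  δ : ∀ (n : ℕ) (S : ShortComplex C), S.ShortExact → (H n S.X₃ →ₗ[k] H (n + 1) S.X₁)
  mono_H0 : ∀ (S : ShortComplex C) (hS : S.ShortExact), Function.Injective (map 0 S.f)
  exact₁ : ∀ (n : ℕ) (S : ShortComplex C) (hS : S.ShortExact),
    Function.Exact (map n S.f) (map n S.g)
  exact₂ : ∀ (n : ℕ) (S : ShortComplex C) (hS : S.ShortExact),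
    Function.Exact (map n S.g) (δ n S hS)
  exact₃ : ∀ (n : ℕ) (S : ShortComplex C) (hS : S.ShortExact),
    Function.Exact (δ n S hS) (map (n + 1) S.f)

attribute [instance] DeltaFunctor.acg DeltaFunctor.mod

namespace CategoryTheory.ShortComplex

variable {𝒜 : Type*} [Category 𝒜] [Abelian 𝒜]

noncomputable def kernelLiftSequence (S : ShortComplex 𝒜) : ShortComplex 𝒜 :=
  ShortComplex.mk (kernel.ι S.f) (kernel.lift S.g S.f S.zero)
    (by rw [← cancel_mono (kernel.ι S.g)]; simp)

theorem Exact.shortExact_kernelLiftSequence {S : ShortComplex 𝒜} (hS : S.Exact) :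
    S.kernelLiftSequence.ShortExact where
  exact := exact_of_f_is_kernel _ <|
    isKernelOfComp (kernel.ι S.g) S.f (kernelIsKernel S.f) _ (kernel.lift_ι _ _ _)
  mono_f := by dsimp [kernelLiftSequence]; infer_instance
  epi_g := hS.epi_kernelLift

end CategoryTheory.ShortComplex

namespace DeltaFunctor

variable {k : Type u} [Field k] {𝒜 : Type u} [Category.{v} 𝒜] [Abelian 𝒜]
  (Hc : DeltaFunctor k 𝒜)

theorem subsingleton_of_isZero {X : 𝒜} (hX : IsZero X) (m : ℕ) : Subsingleton (Hc.H m X) := by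
  -- `X ⟶ X ⟶ X` with both maps `𝟙 X` is short exact as `X` is zero, so `ker id = im id`.
  let S := ShortComplex.mk (𝟙 X) (𝟙 X) (hX.eq_of_src _ _)
  have hS : S.ShortExact := ⟨S.exact_of_isZero_X₂ hX⟩
  refine subsingleton_of_forall_eq 0 fun a => ?_
  simpa [S, Hc.map_id] using (Hc.exact₁ m S hS a).2 ⟨a, by simp [S, Hc.map_id]⟩

theorem subsingleton_X₃_of_shortExact {S : ShortComplex 𝒜} (hS : S.ShortExact) (m : ℕ)
    (h₂ : Subsingleton (Hc.H m S.X₂)) (h₁ : Subsingleton (Hc.H (m + 1) S.X₁)) :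
    Subsingleton (Hc.H m S.X₃) := by
  refine subsingleton_of_forall_eq 0 fun y => ?_
  obtain ⟨x, rfl⟩ := (Hc.exact₂ m S hS y).1 (Subsingleton.elim _ _)
  rw [Subsingleton.elim x 0, map_zero]

theorem bijective_map_zero_of_shortExact {S : ShortComplex 𝒜} (hS : S.ShortExact)
    (h₀ : Subsingleton (Hc.H 0 S.X₁)) (h₁ : Subsingleton (Hc.H 1 S.X₁)) :
    Function.Bijective (Hc.map 0 S.g) := by
  refine ⟨(injective_iff_map_eq_zero _).2 fun y hy => ?_, fun z => ?_⟩
  · obtain ⟨x, rfl⟩ := (Hc.exact₁ 0 S hS y).1 hy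
    rw [Subsingleton.elim x 0, map_zero]
  · exact (Hc.exact₂ 0 S hS z).1 (Subsingleton.elim _ _)

theorem subsingleton_H_kernel_of_exact (X : ℕ → 𝒜) (f : ∀ i, X (i + 1) ⟶ X i)
    (w : ∀ i, f (i + 1) ≫ f i = 0) (hex : ∀ i, (ShortComplex.mk _ _ (w i)).Exact)
    (N : ℕ) (hzero : ∀ i, N ≤ i → IsZero (X i))
    (hvan : ∀ i, Subsingleton (Hc.H i (X (i + 2))) ∧ Subsingleton (Hc.H (i + 1) (X (i + 2))))
    (i : ℕ) :
    Subsingleton (Hc.H i (kernel (f i))) ∧ Subsingleton (Hc.H (i + 1) (kernel (f i))) := by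
  suffices ∀ m i, N ≤ i + m →
      Subsingleton (Hc.H i (kernel (f i))) ∧ Subsingleton (Hc.H (i + 1) (kernel (f i))) from
    this N i (by omega)
  intro m
  induction m with
  | zero =>
    intro i hi
    have hK : IsZero (kernel (f i)) := (hzero (i + 1) (by omega)).of_mono (kernel.ι (f i))
    exact ⟨Hc.subsingleton_of_isZero hK _, Hc.subsingleton_of_isZero hK _⟩
  | succ m ih =>
    intro i hi
    have hS := (hex i).shortExact_kernelLiftSequence
    obtain ⟨h₀, h₁⟩ := ih (i + 1) (by omega)
    obtain ⟨h₂, h₃⟩ := hvan i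
    exact ⟨Hc.subsingleton_X₃_of_shortExact hS i h₂ h₀,
      Hc.subsingleton_X₃_of_shortExact hS (i + 1) h₃ h₁⟩

end DeltaFunctor

def augmentedObj {𝒜 : Type*} (A : ℕ → 𝒜) (B : 𝒜) : ℕ → 𝒜
  | 0 => B
  | i + 1 => A i

def augmentedHom {𝒜 : Type*} [Category 𝒜] {A : ℕ → 𝒜} {B : 𝒜} (d : ∀ i, A (i + 1) ⟶ A i)
    (aug : A 0 ⟶ B) : ∀ i, augmentedObj A B (i + 1) ⟶ augmentedObj A B i
  | 0 => aug
  | i + 1 => d i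

-- The ambient category is that of coherent sheaves on `X`, `Hc.H` is `Ext^•(P, -)`, and
-- `A • → B` is the Koszul resolution `A i = ΛⁱN^∨ ⊗ P` of `B = P|_C`.
theorem stmt17_general {k : Type u} [Field k] {C : Type u} [Category.{v} C] [Abelian C]
    (Hc : DeltaFunctor k C) (n : ℕ)
    (A : ℕ → C) (B : C)
    (d : ∀ i : ℕ, A (i + 1) ⟶ A i) (aug : A 0 ⟶ B)
    (hzero : ∀ i, n ≤ i → Limits.IsZero (A i))
    (w : ∀ i, d (i + 1) ≫ d i = 0) (w0 : d 0 ≫ aug = 0)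
    (hex : ∀ i, (CategoryTheory.ShortComplex.mk (d (i + 1)) (d i) (w i)).Exact)
    (hex0 : (CategoryTheory.ShortComplex.mk (d 0) aug w0).Exact)
    (hepi : CategoryTheory.Epi aug)
    -- the vanishing `Ext^i(P, ΛⁱN^∨ ⊗ P) = Ext^{i-1}(P, ΛⁱN^∨ ⊗ P) = 0`:
    (hvan : ∀ i, 1 ≤ i → i ≤ n - 1 →
      Subsingleton (Hc.H i (A i)) ∧ Subsingleton (Hc.H (i - 1) (A i)))
    -- `P` is simple: `End(P) = Hom(P, A 0) = H⁰(A 0)` is one-dimensional: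
    (hsimple : Module.finrank k (Hc.H 0 (A 0)) = 1) :
    Module.finrank k (Hc.H 0 B) = 1 := by
  have hw : ∀ i, augmentedHom d aug (i + 1) ≫ augmentedHom d aug i = 0
    | 0 => w0
    | i + 1 => w i
  have hexact : ∀ i, (ShortComplex.mk _ _ (hw i)).Exact
    | 0 => hex0
    | i + 1 => hex i
  have hzero_aug : ∀ i, n + 1 ≤ i → IsZero (augmentedObj A B i)
    | 0, h => by omega
    | i + 1, h => hzero i (by omega)
  have hvan_succ : ∀ i,
      Subsingleton (Hc.H i (A (i + 1))) ∧ Subsingleton (Hc.H (i + 1) (A (i + 1))) := by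
    intro i
    by_cases hi : i + 1 ≤ n - 1
    · exact (hvan (i + 1) (by omega) hi).symm
    · have hA := hzero (i + 1) (by omega)
      exact ⟨Hc.subsingleton_of_isZero hA _, Hc.subsingleton_of_isZero hA _⟩
  obtain ⟨h₀, h₁⟩ := Hc.subsingleton_H_kernel_of_exact _ _ hw hexact (n + 1) hzero_aug hvan_succ 0
  have hS : (ShortComplex.kernelSequence aug).ShortExact :=
    { exact := ShortComplex.kernelSequence_exact aug, epi_g := hepi }
  exact (LinearEquiv.ofBijective _
    (Hc.bijective_map_zero_of_shortExact hS h₀ h₁)).finrank_eq.symm.trans hsimple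

theorem stmt17 {k : Type u} [Field k] {C : Type u} [Category.{v} C] [Abelian C]
    (Hc : DeltaFunctor k C) (n : ℕ) (hn : 1 ≤ n)
    (A : ℕ → C) (B : C)
    (d : ∀ i : ℕ, A (i + 1) ⟶ A i) (aug : A 0 ⟶ B)
    (hzero : ∀ i, n ≤ i → Limits.IsZero (A i))
    (w : ∀ i, d (i + 1) ≫ d i = 0) (w0 : d 0 ≫ aug = 0)
    (hex : ∀ i, (CategoryTheory.ShortComplex.mk (d (i + 1)) (d i) (w i)).Exact)
    (hex0 : (CategoryTheory.ShortComplex.mk (d 0) aug w0).Exact)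
    (hepi : CategoryTheory.Epi aug)
    -- the vanishing `Ext^i(P, ΛⁱN^∨ ⊗ P) = Ext^{i-1}(P, ΛⁱN^∨ ⊗ P) = 0`:
    (hvan : ∀ i, 1 ≤ i → i ≤ n - 1 →
      Subsingleton (Hc.H i (A i)) ∧ Subsingleton (Hc.H (i - 1) (A i)))
    -- `P` is simple: `End(P) = Hom(P, A 0) = H⁰(A 0)` is one-dimensional:
    (hsimple : Module.finrank k (Hc.H 0 (A 0)) = 1) :
    Module.finrank k (Hc.H 0 B) = 1 :=
  stmt17_general Hc n A B d aug hzero w w0 hex hex0 hepi hvan hsimple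
end
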